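/- Let 𝓐=(A,δ^A,σ^A,τ^A) and 𝓑=(B,δ^B,σ^B,τ^B) be fuzzy automata over a complete residuated lattice 𝓛 and alphabet X, and let E and F be the greatest forward bisimulation fuzzy equivalence relations on 𝓐 and 𝓑, respectively. Then 𝓐 and 𝓑 are UFB-equivalent if and only if there exists an isomorphism ϕ:𝓐/E→𝓑/F of the factor fuzzy automata such that Ẽ(E_{a₁},E_{a₂}) = F̃(ϕ(E_{a₁}),ϕ(E_{a₂})) for all a₁,a₂∈A. -/
import Mathlib


universe u

/-- A complete residuated lattice: a complete lattice with a commutative monoid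
structure whose unit is the top element, together with a residuum operation
forming an adjoint pair with the multiplication. -/
class CompleteResiduatedLattice (L : Type*) extends CompleteLattice L, CommMonoid L where
  /-- the residuum operation `→` -/
  res : L → L → L
  /-- the adjunction property -/
  adjunction : ∀ x y z : L, x * y ≤ z ↔ x ≤ res y z
  /-- the multiplicative unit `1` is the greatest element -/
  one_eq_top : (1 : L) = ⊤

namespace FuzzyAutomataBisim

/-- A fuzzy automaton over `L` and alphabet `X`, with state set `A`. -/
structure FuzzyAutomaton (L : Type*) [CompleteResiduatedLattice L] (X A : Type*) where
  δ : A → X → A → L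
  σ : A → L
  τ : A → L

variable {L X A B C : Type*} [CompleteResiduatedLattice L]

/-- biresiduum `x ↔ y = (x → y) ⊓ (y → x)` -/
def bires (x y : L) : L :=
  CompleteResiduatedLattice.res x y ⊓ CompleteResiduatedLattice.res y x

/-- inverse of a fuzzy relation -/
def inv (φ : A → B → L) : B → A → L := fun b a => φ a b

/-- composition of fuzzy relations -/
def rcomp (φ : A → B → L) (ψ : B → C → L) : A → C → L := fun a c => ⨆ b, φ a b * ψ b c

/-- composition of a fuzzy set with a fuzzy relation -/
def scomp (f : A → L) (φ : A → B → L) : B → L := fun b => ⨆ a, f a * φ a b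

/-- composition of a fuzzy relation with a fuzzy set -/
def rscomp (φ : A → B → L) (g : B → L) : A → L := fun a => ⨆ b, φ a b * g b

/-- degree of overlapping of two fuzzy sets -/
def sdot (f g : A → L) : L := ⨆ a, f a * g a

/-- kernel `E_A^φ` of a fuzzy relation -/
def ker (φ : A → B → L) : A → A → L := fun a₁ a₂ => ⨅ b, bires (φ a₁ b) (φ a₂ b)

/-- co-kernel `E_B^φ` of a fuzzy relation -/
def coker (φ : A → B → L) : B → B → L := fun b₁ b₂ => ⨅ a, bires (φ a b₁) (φ a b₂)

/-- `φ` is an `L`-function -/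
def IsLFun (φ : A → B → L) : Prop := ∀ a, ∃ b, φ a b = 1

/-- `φ` is surjective, i.e. `φ⁻¹` is an `L`-function -/
def IsSurj (φ : A → B → L) : Prop := ∀ b, ∃ a, φ a b = 1

/-- `φ` is a partial fuzzy function: `φ ∘ φ⁻¹ ∘ φ ≤ φ` -/
def IsPFF (φ : A → B → L) : Prop := rcomp (rcomp φ (inv φ)) φ ≤ φ

/-- `φ` is a uniform fuzzy relation: a partial fuzzy function that is a
surjective `L`-function -/
def IsUniform (φ : A → B → L) : Prop := IsPFF φ ∧ IsLFun φ ∧ IsSurj φ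

/-- the set of crisp descriptions of `φ` -/
def CR (φ : A → B → L) : Set (A → B) := {ψ | ∀ a, φ a (ψ a) = 1}

/-- `ψ : A → B` is `F`-surjective -/
def SurjMod (F : B → B → L) (ψ : A → B) : Prop := ∀ b, ∃ a, F (ψ a) b = 1

/-- fuzzy equivalence relation -/
structure IsFuzzyEquiv (E : A → A → L) : Prop where
  refl : ∀ a, E a a = 1
  symm : ∀ a b, E a b = E b a
  trans : ∀ a b c, E a b * E b c ≤ E a c

/-- fuzzy equality -/
def IsFuzzyEquality (E : A → A → L) : Prop :=
  IsFuzzyEquiv E ∧ ∀ a b, E a b = 1 → a = b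

/-- the factor set `A/E = {E_a : a ∈ A}` -/
abbrev FactorSet (E : A → A → L) := {f : A → L // ∃ a, E a = f}

/-- the class `E_a` as an element of `A/E` -/
def toClass (E : A → A → L) (a : A) : FactorSet E := ⟨E a, a, rfl⟩

/-- a chosen representative of a class -/
noncomputable def rep {E : A → A → L} (c : FactorSet E) : A := c.2.choose

/-- the fuzzy relation `Ẽ` on `A/E` -/
noncomputable def tildeRel (E : A → A → L) : FactorSet E → FactorSet E → L :=
  fun c c' => E (rep c) (rep c')

open Classical in
/-- a chosen crisp description of `φ` -/
noncomputable def crispDesc [Nonempty B] (φ : A → B → L) : A → B :=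
  fun a => if h : ∃ b, φ a b = 1 then h.choose else Classical.arbitrary B

/-- the induced map `φ̃ : A/E_A^φ → B/E_B^φ`, `φ̃(E_a) = F_{ψ(a)}` -/
noncomputable def tilde [Nonempty B] (φ : A → B → L) :
    FactorSet (ker φ) → FactorSet (coker φ) :=
  fun c => toClass (coker φ) (crispDesc φ (rep c))

/-- the fuzzy transition relation `δ_x` -/
def FuzzyAutomaton.δx (M : FuzzyAutomaton L X A) (x : X) : A → A → L := fun a b => M.δ a x b

open Classical in
/-- transitions extended to words -/
noncomputable def deltaWord (M : FuzzyAutomaton L X A) : List X → A → A → L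
  | [] => fun a b => if a = b then (1 : L) else ⊥
  | x :: u => rcomp (M.δx x) (deltaWord M u)

/-- the fuzzy language recognized by `M` : `L(M)(u) = σ ∘ δ_u ∘ τ` -/
noncomputable def lang (M : FuzzyAutomaton L X A) (u : List X) : L :=
  sdot (scomp M.σ (deltaWord M u)) M.τ

/-- forward simulation -/
def IsForwardSim (MA : FuzzyAutomaton L X A) (MB : FuzzyAutomaton L X B)
    (φ : A → B → L) : Prop :=
  MA.σ ≤ scomp MB.σ (inv φ) ∧
  (∀ x, rcomp (inv φ) (MA.δx x) ≤ rcomp (MB.δx x) (inv φ)) ∧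
  rscomp (inv φ) MA.τ ≤ MB.τ

/-- backward simulation -/
def IsBackwardSim (MA : FuzzyAutomaton L X A) (MB : FuzzyAutomaton L X B)
    (φ : A → B → L) : Prop :=
  scomp MA.σ φ ≤ MB.σ ∧
  (∀ x, rcomp (MA.δx x) φ ≤ rcomp φ (MB.δx x)) ∧
  MA.τ ≤ rscomp φ MB.τ

/-- forward bisimulation -/
def IsForwardBisim (MA : FuzzyAutomaton L X A) (MB : FuzzyAutomaton L X B)
    (φ : A → B → L) : Prop :=
  IsForwardSim MA MB φ ∧ IsForwardSim MB MA (inv φ)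

/-- backward bisimulation -/
def IsBackwardBisim (MA : FuzzyAutomaton L X A) (MB : FuzzyAutomaton L X B)
    (φ : A → B → L) : Prop :=
  IsBackwardSim MA MB φ ∧ IsBackwardSim MB MA (inv φ)

/-- backward-forward bisimulation -/
def IsBFBisim (MA : FuzzyAutomaton L X A) (MB : FuzzyAutomaton L X B)
    (φ : A → B → L) : Prop :=
  IsBackwardSim MA MB φ ∧ IsForwardSim MB MA (inv φ)

/-- forward-backward bisimulation -/
def IsFBBisim (MA : FuzzyAutomaton L X A) (MB : FuzzyAutomaton L X B)
    (φ : A → B → L) : Prop :=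
  IsForwardSim MA MB φ ∧ IsBackwardSim MB MA (inv φ)

/-- isomorphism of fuzzy automata -/
def IsIso (MA : FuzzyAutomaton L X A) (MB : FuzzyAutomaton L X B) (h : A → B) : Prop :=
  Function.Bijective h ∧
  (∀ (a₁ : A) (x : X) (a₂ : A), MA.δ a₁ x a₂ = MB.δ (h a₁) x (h a₂)) ∧
  (∀ a, MA.σ a = MB.σ (h a)) ∧
  (∀ a, MA.τ a = MB.τ (h a))

/-- the factor fuzzy automaton `𝓐/E` -/
noncomputable def factorAut (M : FuzzyAutomaton L X A) (E : A → A → L) :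
    FuzzyAutomaton L X (FactorSet E) where
  δ := fun c x c' => rcomp (rcomp E (M.δx x)) E (rep c) (rep c')
  σ := fun c => scomp M.σ E (rep c)
  τ := fun c => rscomp E M.τ (rep c)

/-- the natural fuzzy relation `φ(a₁, E_{a₂}) = E(a₁,a₂)` between `A` and `A/E` -/
def natRel (E : A → A → L) : A → FactorSet E → L := fun a c => c.1 a

/-- the fuzzy relation `G/E` on `A/E` -/
noncomputable def quotRel (E G : A → A → L) : FactorSet E → FactorSet E → L :=
  fun c c' => G (rep c) (rep c')

/-- the fuzzy relation `φ(a₁, E_{a₂}) = G(a₁,a₂)` between `A` and `A/E` -/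
noncomputable def quotNatRel (E G : A → A → L) : A → FactorSet E → L :=
  fun a c => G a (rep c)

/-- UFB-equivalence of fuzzy automata -/
def UFBEquiv (MA : FuzzyAutomaton L X A) (MB : FuzzyAutomaton L X B) : Prop :=
  ∃ φ : A → B → L, IsUniform φ ∧ IsForwardBisim MA MB φ

section Lemmas

open CompleteResiduatedLattice

variable {L : Type*} [CompleteResiduatedLattice L]

lemma le_one' (x : L) : x ≤ 1 := by rw [one_eq_top]; exact le_top

lemma mul_mono_r {x y : L} (h : x ≤ y) (z : L) : x * z ≤ y * z := by
  rw [adjunction]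
  exact h.trans ((adjunction y z (y * z)).1 le_rfl)

lemma mul_mono_l {x y : L} (h : x ≤ y) (z : L) : z * x ≤ z * y := by
  rw [mul_comm z x, mul_comm z y]; exact mul_mono_r h z

lemma mul_mono {x y x' y' : L} (h : x ≤ x') (h' : y ≤ y') : x * y ≤ x' * y' :=
  (mul_mono_r h y).trans (mul_mono_l h' x')

lemma mul_le_left' (x y : L) : x * y ≤ x := by
  calc x * y ≤ x * 1 := mul_mono_l (le_one' y) x
  _ = x := mul_one x

lemma mul_le_right' (x y : L) : x * y ≤ y := by
  rw [mul_comm]; exact mul_le_left' y x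

lemma iSup_mul' {ι : Sort*} (f : ι → L) (x : L) : (⨆ i, f i) * x = ⨆ i, f i * x := by
  apply le_antisymm
  · rw [adjunction]
    exact iSup_le fun i => (adjunction _ _ _).1 (le_iSup (fun i => f i * x) i)
  · exact iSup_le fun i => mul_mono_r (le_iSup f i) x

lemma mul_iSup' {ι : Sort*} (x : L) (f : ι → L) : (x * ⨆ i, f i) = ⨆ i, x * f i := by
  rw [mul_comm, iSup_mul']; simp only [mul_comm]

end Lemmas
section RelLemmas

variable {L A B C D : Type*} [CompleteResiduatedLattice L]

lemma rcomp_assoc' (φ : A → B → L) (ψ : B → C → L) (χ : C → D → L) :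
    rcomp (rcomp φ ψ) χ = rcomp φ (rcomp ψ χ) := by
  funext a d
  simp only [rcomp, iSup_mul', mul_iSup', mul_assoc]
  exact iSup_comm

lemma inv_rcomp (φ : A → B → L) (ψ : B → C → L) :
    inv (rcomp φ ψ) = rcomp (inv ψ) (inv φ) := by
  funext c a
  simp only [inv, rcomp, mul_comm]

lemma inv_inv' (φ : A → B → L) : inv (inv φ) = φ := rfl

lemma rcomp_mono {φ φ' : A → B → L} {ψ ψ' : B → C → L} (h : φ ≤ φ') (h' : ψ ≤ ψ') :
    rcomp φ ψ ≤ rcomp φ' ψ' := fun a c =>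
  iSup_le fun b => (mul_mono (h a b) (h' b c)).trans (le_iSup (fun b => φ' a b * ψ' b c) b)

lemma inv_mono {φ φ' : A → B → L} (h : φ ≤ φ') : inv φ ≤ inv φ' := fun b a => h a b

lemma scomp_rcomp (f : A → L) (φ : A → B → L) (ψ : B → C → L) :
    scomp f (rcomp φ ψ) = scomp (scomp f φ) ψ := by
  funext c
  simp only [scomp, rcomp, iSup_mul', mul_iSup', mul_assoc]
  exact iSup_comm

lemma rscomp_rcomp (φ : A → B → L) (ψ : B → C → L) (g : C → L) :
    rscomp (rcomp φ ψ) g = rscomp φ (rscomp ψ g) := by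
  funext a
  simp only [rscomp, rcomp, iSup_mul', mul_iSup', mul_assoc]
  exact iSup_comm

lemma scomp_mono {f f' : A → L} {φ φ' : A → B → L} (h : f ≤ f') (h' : φ ≤ φ') :
    scomp f φ ≤ scomp f' φ' := fun b =>
  iSup_le fun a => (mul_mono (h a) (h' a b)).trans (le_iSup (fun a => f' a * φ' a b) a)

lemma rscomp_mono {φ φ' : A → B → L} {g g' : B → L} (h : φ ≤ φ') (h' : g ≤ g') :
    rscomp φ g ≤ rscomp φ' g' := fun a =>
  iSup_le fun b => (mul_mono (h a b) (h' b)).trans (le_iSup (fun b => φ' a b * g' b) b)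

end RelLemmas
set_option linter.unusedSectionVars false

section EquivLemmas

variable {L A B C : Type*} [CompleteResiduatedLattice L]

lemma IsFuzzyEquiv.inv_eq {E : A → A → L} (hE : IsFuzzyEquiv E) : inv E = E := by
  funext a b; exact hE.symm b a

lemma IsFuzzyEquiv.rcomp_self {E : A → A → L} (hE : IsFuzzyEquiv E) : rcomp E E = E := by
  funext a c
  apply le_antisymm
  · exact iSup_le fun b => hE.trans a b c
  · calc E a c = E a a * E a c := by rw [hE.refl, one_mul]
    _ ≤ _ := le_iSup (fun b => E a b * E b c) a

lemma le_rcomp_refl_left {E : A → A → L} (hrefl : ∀ a, E a a = 1) (ρ : A → B → L) :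
    ρ ≤ rcomp E ρ := fun a b => by
  calc ρ a b = E a a * ρ a b := by rw [hrefl, one_mul]
  _ ≤ _ := le_iSup (fun a' => E a a' * ρ a' b) a

lemma le_rcomp_refl_right {E : B → B → L} (hrefl : ∀ b, E b b = 1) (ρ : A → B → L) :
    ρ ≤ rcomp ρ E := fun a b => by
  calc ρ a b = ρ a b * E b b := by rw [hrefl, mul_one]
  _ ≤ _ := le_iSup (fun b' => ρ a b' * E b' b) b

lemma le_scomp_refl {E : A → A → L} (hrefl : ∀ a, E a a = 1) (f : A → L) :
    f ≤ scomp f E := fun a => by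
  calc f a = f a * E a a := by rw [hrefl, mul_one]
  _ ≤ _ := le_iSup (fun a' => f a' * E a' a) a

lemma le_rscomp_refl {E : A → A → L} (hrefl : ∀ a, E a a = 1) (g : A → L) :
    g ≤ rscomp E g := fun a => by
  calc g a = E a a * g a := by rw [hrefl, one_mul]
  _ ≤ _ := le_iSup (fun a' => E a a' * g a') a

/-- rows determine equality of classes -/
lemma row_eq_iff {E : A → A → L} (hE : IsFuzzyEquiv E) {a b : A} :
    E a = E b ↔ E a b = 1 := by
  constructor
  · intro h
    rw [show E a b = (E a) b from rfl, h, hE.refl]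
  · intro h
    have h' : E b a = 1 := by rw [hE.symm]; exact h
    funext x
    apply le_antisymm
    · calc E a x = E b a * E a x := by rw [h', one_mul]
      _ ≤ E b x := hE.trans b a x
    · calc E b x = E a b * E b x := by rw [h, one_mul]
      _ ≤ E a x := hE.trans a b x

lemma rep_spec {E : A → A → L} (c : FactorSet E) : E (rep c) = c.1 := c.2.choose_spec

lemma toClass_rep {E : A → A → L} (c : FactorSet E) : toClass E (rep c) = c :=
  Subtype.ext (rep_spec c)

lemma rep_toClass (E : A → A → L) (a : A) : E (rep (toClass E a)) = E a :=
  rep_spec (toClass E a)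

lemma tildeRel_toClass {E : A → A → L} (hE : IsFuzzyEquiv E) (a b : A) :
    tildeRel E (toClass E a) (toClass E b) = E a b := by
  unfold tildeRel
  rw [show (E (rep (toClass E a))) = E a from rep_toClass E a,
    hE.symm a (rep (toClass E b)),
    show (E (rep (toClass E b))) = E b from rep_toClass E b]
  exact hE.symm b a

/-- left-row invariance for rcomp -/
lemma rcomp_row_left {R : A → A → L} {ρ : A → B → L} {a a' : A} (h : R a = R a') :
    rcomp R ρ a = rcomp R ρ a' := by
  funext c; simp only [rcomp, h]

/-- right-row invariance for rcomp (needs symmetry) -/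
lemma rcomp_row_right {R : B → B → L} (hs : ∀ x y, R x y = R y x) {ρ : A → B → L}
    {b b' : B} (h : R b = R b') (a : A) :
    rcomp ρ R a b = rcomp ρ R a b' := by
  simp only [rcomp]
  apply iSup_congr
  intro b₁
  rw [hs b₁ b, show R b b₁ = (R b) b₁ from rfl, h, hs b' b₁]

lemma scomp_row_right {R : B → B → L} (hs : ∀ x y, R x y = R y x) {f : B → L}
    {b b' : B} (h : R b = R b') :
    scomp f R b = scomp f R b' := by
  simp only [scomp]
  apply iSup_congr
  intro b₁
  rw [hs b₁ b, show R b b₁ = (R b) b₁ from rfl, h, hs b' b₁]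

lemma rscomp_row_left {R : A → A → L} {g : A → L} {a a' : A} (h : R a = R a') :
    rscomp R g a = rscomp R g a' := by
  simp only [rscomp, h]

end EquivLemmas
section SimLemmas

variable {L X A B C : Type*} [CompleteResiduatedLattice L]
variable {MA : FuzzyAutomaton L X A} {MB : FuzzyAutomaton L X B} {MC : FuzzyAutomaton L X C}

lemma fwSim_comp {φ : A → B → L} {χ : B → C → L}
    (h1 : IsForwardSim MA MB φ) (h2 : IsForwardSim MB MC χ) :
    IsForwardSim MA MC (rcomp φ χ) := by
  obtain ⟨hσ1, hδ1, hτ1⟩ := h1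
  obtain ⟨hσ2, hδ2, hτ2⟩ := h2
  refine ⟨?_, ?_, ?_⟩
  · rw [inv_rcomp, scomp_rcomp]
    exact hσ1.trans (scomp_mono hσ2 le_rfl)
  · intro x
    rw [inv_rcomp, rcomp_assoc']
    calc rcomp (inv χ) (rcomp (inv φ) (MA.δx x))
        ≤ rcomp (inv χ) (rcomp (MB.δx x) (inv φ)) := rcomp_mono le_rfl (hδ1 x)
      _ = rcomp (rcomp (inv χ) (MB.δx x)) (inv φ) := (rcomp_assoc' _ _ _).symm
      _ ≤ rcomp (rcomp (MC.δx x) (inv χ)) (inv φ) := rcomp_mono (hδ2 x) le_rfl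
      _ = rcomp (MC.δx x) (rcomp (inv χ) (inv φ)) := rcomp_assoc' _ _ _
  · rw [inv_rcomp, rscomp_rcomp]
    exact (rscomp_mono le_rfl hτ1).trans hτ2

lemma fwBisim_comp {φ : A → B → L} {χ : B → C → L}
    (h1 : IsForwardBisim MA MB φ) (h2 : IsForwardBisim MB MC χ) :
    IsForwardBisim MA MC (rcomp φ χ) := by
  refine ⟨fwSim_comp h1.1 h2.1, ?_⟩
  rw [inv_rcomp]
  exact fwSim_comp h2.2 h1.2

lemma fwBisim_inv {φ : A → B → L} (h : IsForwardBisim MA MB φ) :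
    IsForwardBisim MB MA (inv φ) := ⟨h.2, by rw [inv_inv']; exact h.1⟩

end SimLemmas
section Crisp

variable {L A B : Type*} [CompleteResiduatedLattice L]

lemma crispDesc_spec [Nonempty B] {φ : A → B → L} (hL : IsLFun φ) (a : A) :
    φ a (crispDesc φ a) = 1 := by
  unfold crispDesc
  rw [dif_pos (hL a)]
  exact (hL a).choose_spec

end Crisp

section Forward

variable {L X A B : Type*} [CompleteResiduatedLattice L]
variable {MA : FuzzyAutomaton L X A} {MB : FuzzyAutomaton L X B}

lemma forward_dir [Nonempty A] [Nonempty B] {E : A → A → L} {F : B → B → L}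
    (hEeq : IsFuzzyEquiv E) (hEbis : IsForwardBisim MA MA E)
    (hEmax : ∀ R : A → A → L, IsForwardBisim MA MA R → R ≤ E)
    (hFeq : IsFuzzyEquiv F) (hFbis : IsForwardBisim MB MB F)
    (hFmax : ∀ R : B → B → L, IsForwardBisim MB MB R → R ≤ F)
    (hU : UFBEquiv MA MB) :
    ∃ ϕ : FactorSet E → FactorSet F,
      IsIso (factorAut MA E) (factorAut MB F) ϕ ∧
      ∀ a₁ a₂ : A,
        tildeRel E (toClass E a₁) (toClass E a₂) =
          tildeRel F (ϕ (toClass E a₁)) (ϕ (toClass E a₂)) := by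
  obtain ⟨φ, hφu, hφb⟩ := hU
  set θ : A → B → L := rcomp (rcomp E φ) F with hθdef
  have hθbis : IsForwardBisim MA MB θ := fwBisim_comp (fwBisim_comp hEbis hφb) hFbis
  have hinvθ : inv θ = rcomp F (rcomp (inv φ) E) := by
    rw [hθdef, inv_rcomp, inv_rcomp, hEeq.inv_eq, hFeq.inv_eq]
  -- generic term bound for θ
  have hterm : ∀ a₁ a₂ b₁ b₂, E a₁ a₂ * φ a₂ b₁ * F b₁ b₂ ≤ θ a₁ b₂ := by
    intro a₁ a₂ b₁ b₂
    calc E a₁ a₂ * φ a₂ b₁ * F b₁ b₂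
        ≤ (⨆ a', E a₁ a' * φ a' b₁) * F b₁ b₂ :=
          mul_mono_r (le_iSup (fun a' => E a₁ a' * φ a' b₁) a₂) _
      _ ≤ ⨆ b', rcomp E φ a₁ b' * F b' b₂ :=
          le_iSup (fun b' => rcomp E φ a₁ b' * F b' b₂) b₁
  have hθLfun : IsLFun θ := by
    intro a
    obtain ⟨b, hb⟩ := hφu.2.1 a
    refine ⟨b, le_antisymm (le_one' _) ?_⟩
    calc (1 : L) = E a a * φ a b * F b b := by
          rw [hEeq.refl, hb, hFeq.refl, one_mul, one_mul]
      _ ≤ θ a b := hterm a a b b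
  have hθSurj : IsSurj θ := by
    intro b
    obtain ⟨a, ha⟩ := hφu.2.2 b
    refine ⟨a, le_antisymm (le_one' _) ?_⟩
    calc (1 : L) = E a a * φ a b * F b b := by
          rw [hEeq.refl, ha, hFeq.refl, one_mul, one_mul]
      _ ≤ θ a b := hterm a a b b
  have hEmax' : rcomp (rcomp φ F) (inv φ) ≤ E :=
    hEmax _ (fwBisim_comp (fwBisim_comp hφb hFbis) (fwBisim_inv hφb))
  have hFmax' : rcomp (rcomp (inv φ) E) φ ≤ F :=
    hFmax _ (fwBisim_comp (fwBisim_comp (fwBisim_inv hφb) hEbis) hφb)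
  have hθθ : rcomp θ (inv θ) = E := by
    apply le_antisymm
    · calc rcomp θ (inv θ)
          = rcomp E (rcomp (rcomp (rcomp φ F) (inv φ)) E) := by
            rw [hinvθ, hθdef]
            simp only [rcomp_assoc']
            rw [← rcomp_assoc' F F, hFeq.rcomp_self]
        _ ≤ rcomp E (rcomp E E) := rcomp_mono le_rfl (rcomp_mono hEmax' le_rfl)
        _ = E := by rw [hEeq.rcomp_self, hEeq.rcomp_self]
    · intro a₁ a₂
      obtain ⟨b, hb⟩ := hφu.2.1 a₂
      have h1 : θ a₂ b = 1 := by
        refine le_antisymm (le_one' _) ?_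
        calc (1 : L) = E a₂ a₂ * φ a₂ b * F b b := by
              rw [hEeq.refl, hb, hFeq.refl, one_mul, one_mul]
          _ ≤ θ a₂ b := hterm a₂ a₂ b b
      have h2 : E a₁ a₂ ≤ θ a₁ b := by
        calc E a₁ a₂ = E a₁ a₂ * φ a₂ b * F b b := by
              rw [hb, hFeq.refl, mul_one, mul_one]
          _ ≤ θ a₁ b := hterm a₁ a₂ b b
      calc E a₁ a₂ ≤ θ a₁ b * θ a₂ b := by rw [h1, mul_one]; exact h2
        _ ≤ rcomp θ (inv θ) a₁ a₂ := le_iSup (fun b' => θ a₁ b' * inv θ b' a₂) b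
  have hθθ' : rcomp (inv θ) θ = F := by
    apply le_antisymm
    · calc rcomp (inv θ) θ
          = rcomp F (rcomp (rcomp (rcomp (inv φ) E) φ) F) := by
            rw [hinvθ, hθdef]
            simp only [rcomp_assoc']
            rw [← rcomp_assoc' E E, hEeq.rcomp_self]
        _ ≤ rcomp F (rcomp F F) := rcomp_mono le_rfl (rcomp_mono hFmax' le_rfl)
        _ = F := by rw [hFeq.rcomp_self, hFeq.rcomp_self]
    · intro b₁ b₂
      obtain ⟨a, ha⟩ := hφu.2.2 b₁
      have h1 : θ a b₁ = 1 := by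
        refine le_antisymm (le_one' _) ?_
        calc (1 : L) = E a a * φ a b₁ * F b₁ b₁ := by
              rw [hEeq.refl, ha, hFeq.refl, one_mul, one_mul]
          _ ≤ θ a b₁ := hterm a a b₁ b₁
      have h2 : F b₁ b₂ ≤ θ a b₂ := by
        calc F b₁ b₂ = E a a * φ a b₁ * F b₁ b₂ := by
              rw [hEeq.refl, ha, one_mul, one_mul]
          _ ≤ θ a b₂ := hterm a a b₁ b₂
      calc F b₁ b₂ ≤ θ a b₁ * θ a b₂ := by rw [h1, one_mul]; exact h2
        _ ≤ rcomp (inv θ) θ b₁ b₂ := le_iSup (fun a' => inv θ b₁ a' * θ a' b₂) a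
  -- collapsing identities
  have hEθ : rcomp E θ = θ := by
    rw [hθdef, ← rcomp_assoc', ← rcomp_assoc', hEeq.rcomp_self]
  have hθF : rcomp θ F = θ := by
    rw [hθdef, rcomp_assoc', hFeq.rcomp_self]
  have hFinvθ : rcomp F (inv θ) = inv θ := by
    rw [hinvθ, ← rcomp_assoc', hFeq.rcomp_self]
  have hinvθE : rcomp (inv θ) E = inv θ := by
    rw [hinvθ, rcomp_assoc', rcomp_assoc', hEeq.rcomp_self]
  have hid : rcomp (rcomp θ (inv θ)) θ = θ := by rw [hθθ]; exact hEθ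
  -- pointwise partial-fuzzy-function property
  have hpff : ∀ a a' b' b, θ a b' * θ a' b' * θ a' b ≤ θ a b := by
    intro a a' b' b
    have h1 : θ a b' * θ a' b' ≤ rcomp θ (inv θ) a a' :=
      le_iSup (fun b'' => θ a b'' * inv θ b'' a') b'
    have h2 : rcomp θ (inv θ) a a' * θ a' b ≤ rcomp (rcomp θ (inv θ)) θ a b :=
      le_iSup (fun a'' => rcomp θ (inv θ) a a'' * θ a'' b) a'
    exact (mul_mono_r h1 _).trans (h2.trans (le_of_eq (by rw [hid])))
  set ψ : A → B := crispDesc θ with hψdef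
  have hψ : ∀ a, θ a (ψ a) = 1 := fun a => crispDesc_spec hθLfun a
  -- K1 : θ a b = F (ψ a) b
  have hK1 : ∀ a b, θ a b = F (ψ a) b := by
    intro a b
    apply le_antisymm
    · calc θ a b = θ a (ψ a) * θ a b := by rw [hψ, one_mul]
        _ ≤ ⨆ a', inv θ (ψ a) a' * θ a' b :=
          le_iSup (fun a' => inv θ (ψ a) a' * θ a' b) a
        _ = F (ψ a) b := by rw [show (⨆ a', inv θ (ψ a) a' * θ a' b)
              = rcomp (inv θ) θ (ψ a) b from rfl, hθθ']
    · rw [show F (ψ a) b = rcomp (inv θ) θ (ψ a) b from by rw [hθθ']]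
      refine iSup_le fun a' => ?_
      have : inv θ (ψ a) a' * θ a' b = θ a (ψ a) * θ a' (ψ a) * θ a' b := by
        rw [hψ, one_mul]; rfl
      rw [this]
      exact hpff a a' (ψ a) b
  -- K2 : E a₁ a₂ = F (ψ a₁) (ψ a₂)
  have hK2 : ∀ a₁ a₂, E a₁ a₂ = F (ψ a₁) (ψ a₂) := by
    intro a₁ a₂
    rw [show E a₁ a₂ = rcomp θ (inv θ) a₁ a₂ from by rw [hθθ]]
    apply le_antisymm
    · refine iSup_le fun b => ?_
      have h1 : θ a₁ b * inv θ b a₂ = F (ψ a₁) b * F b (ψ a₂) := by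
        rw [show inv θ b a₂ = θ a₂ b from rfl, hK1 a₁ b, hK1 a₂ b, hFeq.symm (ψ a₂) b]
      rw [h1]
      exact hFeq.trans _ _ _
    · calc F (ψ a₁) (ψ a₂) = θ a₁ (ψ a₂) * θ a₂ (ψ a₂) := by rw [hψ, mul_one, hK1]
        _ ≤ rcomp θ (inv θ) a₁ a₂ := le_iSup (fun b => θ a₁ b * inv θ b a₂) (ψ a₂)
  -- main transfer identities for the factor automata
  have hSub2 : ∀ x : X, rcomp (rcomp E (MA.δx x)) E = rcomp (rcomp θ (MB.δx x)) (inv θ) := by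
    intro x
    apply le_antisymm
    · calc rcomp (rcomp E (MA.δx x)) E
          = rcomp θ (rcomp (rcomp (inv θ) (MA.δx x)) (rcomp θ (inv θ))) := by
            rw [← hθθ]; simp only [rcomp_assoc']
        _ ≤ rcomp θ (rcomp (rcomp (MB.δx x) (inv θ)) (rcomp θ (inv θ))) :=
            rcomp_mono le_rfl (rcomp_mono (hθbis.1.2.1 x) le_rfl)
        _ = rcomp (rcomp θ (MB.δx x)) (rcomp (rcomp (inv θ) θ) (inv θ)) := by
            simp only [rcomp_assoc']
        _ = rcomp (rcomp θ (MB.δx x)) (inv θ) := by rw [hθθ', hFinvθ]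
    · have hδ' : rcomp θ (MB.δx x) ≤ rcomp (MA.δx x) θ := by
        have h := hθbis.2.2.1 x; rwa [inv_inv'] at h
      calc rcomp (rcomp θ (MB.δx x)) (inv θ)
          ≤ rcomp (rcomp (MA.δx x) θ) (inv θ) := rcomp_mono hδ' le_rfl
        _ = rcomp (MA.δx x) E := by rw [rcomp_assoc', hθθ]
        _ ≤ rcomp E (rcomp (MA.δx x) E) := le_rcomp_refl_left hEeq.refl _
        _ = rcomp (rcomp E (MA.δx x)) E := (rcomp_assoc' _ _ _).symm
  have hSub1 : ∀ (x : X) (a₁ a₂ : A), rcomp (rcomp F (MB.δx x)) F (ψ a₁) (ψ a₂)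
      = rcomp (rcomp θ (MB.δx x)) (inv θ) a₁ a₂ := by
    intro x a₁ a₂
    simp only [rcomp]
    apply iSup_congr
    intro b₂
    have h1 : (⨆ b₁, F (ψ a₁) b₁ * MB.δx x b₁ b₂) = ⨆ b₁, θ a₁ b₁ * MB.δx x b₁ b₂ := by
      apply iSup_congr; intro b₁; rw [hK1]
    rw [h1, hFeq.symm b₂ (ψ a₂), ← hK1 a₂ b₂]
    rfl
  have hσmain : ∀ a, scomp MA.σ E a = scomp MB.σ F (ψ a) := by
    intro a
    have h1 : scomp MB.σ F (ψ a) = scomp MB.σ (inv θ) a := by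
      simp only [scomp]
      apply iSup_congr; intro b
      rw [hFeq.symm b (ψ a), ← hK1 a b]; rfl
    rw [h1]
    have h2 : scomp MA.σ E = scomp MB.σ (inv θ) := by
      apply le_antisymm
      · calc scomp MA.σ E = scomp (scomp MA.σ θ) (inv θ) := by rw [← scomp_rcomp, hθθ]
          _ ≤ scomp (scomp (scomp MB.σ (inv θ)) θ) (inv θ) :=
              scomp_mono (scomp_mono hθbis.1.1 le_rfl) le_rfl
          _ = scomp MB.σ (rcomp (rcomp (inv θ) θ) (inv θ)) := by
              rw [scomp_rcomp MB.σ (rcomp (inv θ) θ) (inv θ), scomp_rcomp MB.σ (inv θ) θ]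
          _ = scomp MB.σ (inv θ) := by rw [hθθ', hFinvθ]
      · have hσ' : MB.σ ≤ scomp MA.σ θ := by have h := hθbis.2.1; rwa [inv_inv'] at h
        calc scomp MB.σ (inv θ) ≤ scomp (scomp MA.σ θ) (inv θ) := scomp_mono hσ' le_rfl
          _ = scomp MA.σ E := by rw [← scomp_rcomp, hθθ]
    rw [h2]
  have hτmain : ∀ a, rscomp E MA.τ a = rscomp F MB.τ (ψ a) := by
    intro a
    have h1 : rscomp F MB.τ (ψ a) = rscomp θ MB.τ a := by
      simp only [rscomp]
      apply iSup_congr; intro b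
      rw [← hK1 a b]
    rw [h1]
    have h2 : rscomp E MA.τ = rscomp θ MB.τ := by
      apply le_antisymm
      · calc rscomp E MA.τ = rscomp θ (rscomp (inv θ) MA.τ) := by rw [← rscomp_rcomp, hθθ]
          _ ≤ rscomp θ MB.τ := rscomp_mono le_rfl hθbis.1.2.2
      · have hτ' : rscomp θ MB.τ ≤ MA.τ := by have h := hθbis.2.2.2; rwa [inv_inv'] at h
        exact hτ'.trans (le_rscomp_refl hEeq.refl MA.τ)
    rw [h2]
  -- the isomorphism
  refine ⟨fun c => toClass F (ψ (rep c)), ⟨⟨?_, ?_⟩, ?_, ?_, ?_⟩, ?_⟩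
  · -- injective
    intro c₁ c₂ h
    have h1 : F (ψ (rep c₁)) = F (ψ (rep c₂)) := congrArg Subtype.val h
    have h2 : E (rep c₁) (rep c₂) = 1 := by
      rw [hK2]; exact (row_eq_iff hFeq).1 h1
    have h3 : E (rep c₁) = E (rep c₂) := (row_eq_iff hEeq).2 h2
    rw [← toClass_rep c₁, ← toClass_rep c₂]
    exact Subtype.ext h3
  · -- surjective
    intro d
    obtain ⟨a, ha⟩ := hθSurj (rep d)
    refine ⟨toClass E a, ?_⟩
    have h0 : E (rep (toClass E a)) a = 1 := by
      rw [rep_toClass E a, hEeq.refl]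
    have h1 : F (ψ (rep (toClass E a))) (ψ a) = 1 := by rw [← hK2]; exact h0
    have h2 : F (ψ a) (rep d) = 1 := by rw [← hK1]; exact ha
    apply Subtype.ext
    show F (ψ (rep (toClass E a))) = d.1
    rw [(row_eq_iff hFeq).2 h1, (row_eq_iff hFeq).2 h2]
    exact rep_spec d
  · -- δ
    intro c x c'
    show rcomp (rcomp E (MA.δx x)) E (rep c) (rep c')
        = rcomp (rcomp F (MB.δx x)) F (rep (toClass F (ψ (rep c)))) (rep (toClass F (ψ (rep c'))))
    have hL : rcomp F (MB.δx x) (rep (toClass F (ψ (rep c)))) = rcomp F (MB.δx x) (ψ (rep c)) :=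
      rcomp_row_left (rep_toClass F (ψ (rep c)))
    have hL2 : rcomp (rcomp F (MB.δx x)) F (rep (toClass F (ψ (rep c))))
        = rcomp (rcomp F (MB.δx x)) F (ψ (rep c)) := rcomp_row_left hL
    have hR : rcomp (rcomp F (MB.δx x)) F (ψ (rep c)) (rep (toClass F (ψ (rep c'))))
        = rcomp (rcomp F (MB.δx x)) F (ψ (rep c)) (ψ (rep c')) :=
      rcomp_row_right hFeq.symm (rep_toClass F (ψ (rep c'))) _
    rw [congrFun hL2 (rep (toClass F (ψ (rep c')))), hR,
      hSub1 x (rep c) (rep c'), hSub2 x]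
  · -- σ
    intro c
    show scomp MA.σ E (rep c) = scomp MB.σ F (rep (toClass F (ψ (rep c))))
    rw [scomp_row_right hFeq.symm (rep_toClass F (ψ (rep c))), ← hσmain]
  · -- τ
    intro c
    show rscomp E MA.τ (rep c) = rscomp F MB.τ (rep (toClass F (ψ (rep c))))
    rw [rscomp_row_left (rep_toClass F (ψ (rep c))), ← hτmain]
  · -- tildeRel preservation
    intro a₁ a₂
    have hϕ : ∀ a, toClass F (ψ (rep (toClass E a))) = toClass F (ψ a) := by
      intro a
      apply Subtype.ext
      show F (ψ (rep (toClass E a))) = F (ψ a)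
      apply (row_eq_iff hFeq).2
      rw [← hK2, rep_toClass E a, hEeq.refl]
    show tildeRel E (toClass E a₁) (toClass E a₂)
        = tildeRel F (toClass F (ψ (rep (toClass E a₁)))) (toClass F (ψ (rep (toClass E a₂))))
    rw [hϕ, hϕ, tildeRel_toClass hEeq, tildeRel_toClass hFeq, hK2]

end Forward
section Backward

variable {L X A B : Type*} [CompleteResiduatedLattice L]
variable {MA : FuzzyAutomaton L X A} {MB : FuzzyAutomaton L X B}

lemma backward_dir {E : A → A → L} {F : B → B → L}
    (hEeq : IsFuzzyEquiv E) (hEbis : IsForwardBisim MA MA E)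
    (hFeq : IsFuzzyEquiv F) (hFbis : IsForwardBisim MB MB F)
    (ϕ : FactorSet E → FactorSet F)
    (hiso : IsIso (factorAut MA E) (factorAut MB F) ϕ)
    (htilde : ∀ a₁ a₂ : A, tildeRel E (toClass E a₁) (toClass E a₂) =
        tildeRel F (ϕ (toClass E a₁)) (ϕ (toClass E a₂))) :
    UFBEquiv MA MB := by
  set G : A → B → L := fun a b => F (rep (ϕ (toClass E a))) b with hG
  -- pointwise star identity
  have hstar : ∀ a₁ a₂, E a₁ a₂ = F (rep (ϕ (toClass E a₁))) (rep (ϕ (toClass E a₂))) := by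
    intro a₁ a₂
    have h0 := htilde a₁ a₂
    rw [tildeRel_toClass hEeq] at h0
    exact h0
  -- iso conditions transported to arbitrary representatives
  have hδiso : ∀ (x : X) (a₁ a₂ : A),
      rcomp (rcomp E (MA.δx x)) E a₁ a₂
        = rcomp (rcomp F (MB.δx x)) F (rep (ϕ (toClass E a₁))) (rep (ϕ (toClass E a₂))) := by
    intro x a₁ a₂
    have h0 := hiso.2.1 (toClass E a₁) x (toClass E a₂)
    have hL : rcomp (rcomp E (MA.δx x)) E (rep (toClass E a₁))
        = rcomp (rcomp E (MA.δx x)) E a₁ :=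
      rcomp_row_left (rcomp_row_left (rep_toClass E a₁))
    have hR : rcomp (rcomp E (MA.δx x)) E a₁ (rep (toClass E a₂))
        = rcomp (rcomp E (MA.δx x)) E a₁ a₂ :=
      rcomp_row_right hEeq.symm (rep_toClass E a₂) _
    rw [← hR, ← congrFun hL (rep (toClass E a₂))]
    exact h0
  have hσiso : ∀ a, scomp MA.σ E a = scomp MB.σ F (rep (ϕ (toClass E a))) := by
    intro a
    have h0 := hiso.2.2.1 (toClass E a)
    rw [← scomp_row_right hEeq.symm (rep_toClass E a)]
    exact h0
  have hτiso : ∀ a, rscomp E MA.τ a = rscomp F MB.τ (rep (ϕ (toClass E a))) := by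
    intro a
    have h0 := hiso.2.2.2 (toClass E a)
    rw [← rscomp_row_left (rep_toClass E a)]
    exact h0
  -- facts about the bisimulation equivalences E and F
  have hEδ : ∀ x, rcomp E (MA.δx x) ≤ rcomp (MA.δx x) E := by
    intro x; have h := hEbis.1.2.1 x; rwa [hEeq.inv_eq] at h
  have hFδ : ∀ x, rcomp F (MB.δx x) ≤ rcomp (MB.δx x) F := by
    intro x; have h := hFbis.1.2.1 x; rwa [hFeq.inv_eq] at h
  have hEδE_le : ∀ x, rcomp (rcomp E (MA.δx x)) E ≤ rcomp (MA.δx x) E := by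
    intro x
    calc rcomp (rcomp E (MA.δx x)) E
        ≤ rcomp (rcomp (MA.δx x) E) E := rcomp_mono (hEδ x) le_rfl
      _ = rcomp (MA.δx x) E := by rw [rcomp_assoc', hEeq.rcomp_self]
  have hle_EδE : ∀ x, MA.δx x ≤ rcomp (rcomp E (MA.δx x)) E := fun x =>
    (le_rcomp_refl_left hEeq.refl _).trans (le_rcomp_refl_right hEeq.refl _)
  have hEtau : rscomp E MA.τ = MA.τ := by
    apply le_antisymm
    · have h := hEbis.1.2.2; rwa [hEeq.inv_eq] at h
    · exact le_rscomp_refl hEeq.refl MA.τ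
  have hFtau : rscomp F MB.τ = MB.τ := by
    apply le_antisymm
    · have h := hFbis.1.2.2; rwa [hFeq.inv_eq] at h
    · exact le_rscomp_refl hFeq.refl MB.τ
  have hEσ : MA.σ ≤ scomp MA.σ E := le_scomp_refl hEeq.refl MA.σ
  have hFσ : MB.σ ≤ scomp MB.σ F := le_scomp_refl hFeq.refl MB.σ
  -- relation-level facts about G
  have hJ1 : rcomp (inv G) G ≤ F := by
    intro b b'
    refine iSup_le fun a => ?_
    have h1 : inv G b a * G a b'
        = F b (rep (ϕ (toClass E a))) * F (rep (ϕ (toClass E a))) b' := by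
      simp only [inv, hG]
      rw [hFeq.symm (rep (ϕ (toClass E a))) b]
    rw [h1]; exact hFeq.trans _ _ _
  have hJ2 : rcomp F (inv G) = inv G := by
    funext b a
    apply le_antisymm
    · refine iSup_le fun b' => ?_
      have h1 : F b b' * inv G b' a
          = F b b' * F b' (rep (ϕ (toClass E a))) := by
        simp only [inv, hG]
        rw [hFeq.symm (rep (ϕ (toClass E a))) b']
      rw [h1, show inv G b a = F b (rep (ϕ (toClass E a))) from by
        simp only [inv, hG]; rw [hFeq.symm (rep (ϕ (toClass E a))) b]]
      exact hFeq.trans _ _ _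
    · calc inv G b a = F b b * inv G b a := by rw [hFeq.refl, one_mul]
        _ ≤ _ := le_iSup (fun b' => F b b' * inv G b' a) b
  have hJ3 : rcomp E G = G := by
    funext a b
    apply le_antisymm
    · refine iSup_le fun a' => ?_
      have h1 : E a a' * G a' b
          = F (rep (ϕ (toClass E a))) (rep (ϕ (toClass E a')))
            * F (rep (ϕ (toClass E a'))) b := by
        rw [hstar a a']
      rw [h1, show G a b = F (rep (ϕ (toClass E a))) b from rfl]
      exact hFeq.trans _ _ _
    · calc G a b = E a a * G a b := by rw [hEeq.refl, one_mul]
        _ ≤ _ := le_iSup (fun a' => E a a' * G a' b) a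
  have hGsurj : ∀ b, ∃ a, G a b = 1 := by
    intro b
    obtain ⟨c, hc⟩ := hiso.1.2 (toClass F b)
    refine ⟨rep c, ?_⟩
    have hc' : ϕ (toClass E (rep c)) = toClass F b := by rw [toClass_rep c]; exact hc
    show F (rep (ϕ (toClass E (rep c)))) b = 1
    rw [hc', rep_toClass F b, hFeq.refl]
  have hGrefl : ∀ b, rcomp (inv G) G b b = 1 := by
    intro b
    obtain ⟨a, ha⟩ := hGsurj b
    refine le_antisymm (le_one' _) ?_
    calc (1 : L) = G a b * G a b := by rw [ha, one_mul]
      _ ≤ rcomp (inv G) G b b := le_iSup (fun a' => inv G b a' * G a' b) a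
  have hI1 : ∀ x : X, rcomp (rcomp E (MA.δx x)) E = rcomp (rcomp G (MB.δx x)) (inv G) := by
    intro x
    funext a₁ a₂
    rw [hδiso x a₁ a₂]
    simp only [rcomp, inv, hG]
    apply iSup_congr
    intro b₂
    rw [hFeq.symm b₂ (rep (ϕ (toClass E a₂)))]
  have hS1 : scomp MA.σ E = scomp MB.σ (inv G) := by
    funext a
    rw [hσiso a]
    simp only [scomp, inv, hG]
    apply iSup_congr
    intro b
    rw [hFeq.symm b (rep (ϕ (toClass E a)))]
  have hT1 : rscomp E MA.τ = rscomp G MB.τ := by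
    funext a
    rw [hτiso a]
    simp only [rscomp, hG]
  -- assemble
  refine ⟨G, ⟨⟨?_, ?_, ?_⟩, ⟨⟨?_, ?_, ?_⟩, ⟨?_, ?_, ?_⟩⟩⟩⟩
  · -- PFF
    intro a c
    refine iSup_le fun a' => ?_
    have h1 : rcomp G (inv G) a a'
        ≤ F (rep (ϕ (toClass E a))) (rep (ϕ (toClass E a'))) := by
      refine iSup_le fun b => ?_
      have h2 : G a b * inv G b a'
          = F (rep (ϕ (toClass E a))) b * F b (rep (ϕ (toClass E a'))) := by
        simp only [inv, hG]
        rw [hFeq.symm (rep (ϕ (toClass E a'))) b]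
      rw [h2]; exact hFeq.trans _ _ _
    calc rcomp G (inv G) a a' * G a' c
        ≤ F (rep (ϕ (toClass E a))) (rep (ϕ (toClass E a')))
          * F (rep (ϕ (toClass E a'))) c := mul_mono_r h1 _
      _ ≤ F (rep (ϕ (toClass E a))) c := hFeq.trans _ _ _
      _ = G a c := rfl
  · -- L-function
    intro a
    refine ⟨rep (ϕ (toClass E a)), ?_⟩
    show F (rep (ϕ (toClass E a))) (rep (ϕ (toClass E a))) = 1
    exact hFeq.refl _
  · -- surjective
    exact hGsurj
  · -- σ forward
    exact hEσ.trans (le_of_eq hS1)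
  · -- δ forward
    intro x
    calc rcomp (inv G) (MA.δx x)
        ≤ rcomp (inv G) (rcomp (rcomp E (MA.δx x)) E) := rcomp_mono le_rfl (hle_EδE x)
      _ = rcomp (inv G) (rcomp (rcomp G (MB.δx x)) (inv G)) := by rw [hI1 x]
      _ = rcomp (rcomp (rcomp (inv G) G) (MB.δx x)) (inv G) := by simp only [rcomp_assoc']
      _ ≤ rcomp (rcomp F (MB.δx x)) (inv G) := rcomp_mono (rcomp_mono hJ1 le_rfl) le_rfl
      _ ≤ rcomp (rcomp (MB.δx x) F) (inv G) := rcomp_mono (hFδ x) le_rfl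
      _ = rcomp (MB.δx x) (rcomp F (inv G)) := rcomp_assoc' _ _ _
      _ = rcomp (MB.δx x) (inv G) := by rw [hJ2]
  · -- τ forward
    calc rscomp (inv G) MA.τ
        = rscomp (inv G) (rscomp G MB.τ) := by rw [← hT1, hEtau]
      _ = rscomp (rcomp (inv G) G) MB.τ := (rscomp_rcomp _ _ _).symm
      _ ≤ rscomp F MB.τ := rscomp_mono hJ1 le_rfl
      _ = MB.τ := hFtau
  · -- σ backward
    rw [inv_inv']
    intro b
    obtain ⟨c, hc⟩ := hiso.1.2 (toClass F b)
    have hc' : ϕ (toClass E (rep c)) = toClass F b := by rw [toClass_rep c]; exact hc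
    have hFrow : F (rep (ϕ (toClass E (rep c)))) = F b := by
      rw [hc']; exact rep_toClass F b
    have h1 : F (rep (ϕ (toClass E (rep c)))) b = 1 := by
      rw [hFrow, hFeq.refl]
    calc MB.σ b ≤ scomp MB.σ F b := hFσ b
      _ = scomp MB.σ F (rep (ϕ (toClass E (rep c)))) :=
          (scomp_row_right hFeq.symm hFrow).symm
      _ = scomp MA.σ E (rep c) := (hσiso (rep c)).symm
      _ ≤ scomp MA.σ G b := by
          refine iSup_le fun a' => ?_
          have h2 : E a' (rep c) ≤ G a' b := by
            rw [hstar a' (rep c)]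
            calc F (rep (ϕ (toClass E a'))) (rep (ϕ (toClass E (rep c))))
                = F (rep (ϕ (toClass E a'))) (rep (ϕ (toClass E (rep c))))
                  * F (rep (ϕ (toClass E (rep c)))) b := by rw [h1, mul_one]
              _ ≤ F (rep (ϕ (toClass E a'))) b := hFeq.trans _ _ _
              _ = G a' b := rfl
          exact (mul_mono_l h2 _).trans (le_iSup (fun a' => MA.σ a' * G a' b) a')
  · -- δ backward
    intro x
    rw [inv_inv']
    calc rcomp G (MB.δx x)
        ≤ rcomp (rcomp G (MB.δx x)) (rcomp (inv G) G) := le_rcomp_refl_right hGrefl _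
      _ = rcomp (rcomp (rcomp G (MB.δx x)) (inv G)) G := by simp only [rcomp_assoc']
      _ = rcomp (rcomp (rcomp E (MA.δx x)) E) G := by rw [← hI1 x]
      _ ≤ rcomp (rcomp (MA.δx x) E) G := rcomp_mono (hEδE_le x) le_rfl
      _ = rcomp (MA.δx x) (rcomp E G) := rcomp_assoc' _ _ _
      _ = rcomp (MA.δx x) G := by rw [hJ3]
  · -- τ backward
    rw [inv_inv']
    exact le_of_eq (hT1.symm.trans hEtau)

end Backward

/-- characterization of UFB-equivalence via factor automata -/
theorem ufbEquiv_iff_factor_iso {L X A B : Type*} [CompleteResiduatedLattice L]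
    [Nonempty A] [Nonempty B]
    (MA : FuzzyAutomaton L X A) (MB : FuzzyAutomaton L X B)
    (E : A → A → L) (F : B → B → L)
    (hE : IsFuzzyEquiv E ∧ IsForwardBisim MA MA E ∧
      ∀ R : A → A → L, IsForwardBisim MA MA R → R ≤ E)
    (hF : IsFuzzyEquiv F ∧ IsForwardBisim MB MB F ∧
      ∀ R : B → B → L, IsForwardBisim MB MB R → R ≤ F) :
    UFBEquiv MA MB ↔
      (∃ ϕ : FactorSet E → FactorSet F,
        IsIso (factorAut MA E) (factorAut MB F) ϕ ∧
        ∀ a₁ a₂ : A,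
          tildeRel E (toClass E a₁) (toClass E a₂) =
            tildeRel F (ϕ (toClass E a₁)) (ϕ (toClass E a₂))) := by
  obtain ⟨hEeq, hEbis, hEmax⟩ := hE
  obtain ⟨hFeq, hFbis, hFmax⟩ := hF
  constructor
  · exact fun hU => forward_dir hEeq hEbis hEmax hFeq hFbis hFmax hU
  · rintro ⟨ϕ, hiso, htilde⟩
    exact backward_dir hEeq hEbis hFeq hFbis ϕ hiso htilde

end FuzzyAutomataBisim
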